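/- Let J be a finite group and M a finitely generated J-module that is free as a ℤ-module. Then M^J = 0 if and only if M admits no nonzero quotient J-module which is free as a ℤ-module and on which J acts trivially (equivalently: for every J-submodule Y of M such that M/Y is ℤ-free and J acts trivially on M/Y, one has Y = M). -/

import Mathlib

/-! The norm map `N m = ∑ σ • m` takes values in `M^J`, is multiplication by `|J|` on `M^J`, and
agrees with `|J| • m` modulo every subgroup `Y` containing all `σ • m - m`. If `M^J = 0`, then
`N = 0`, so `|J| • m ∈ Y`, and `m ∈ Y` because `M ⧸ Y` is torsion-free. Conversely, `Y = ker N` is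
an admissible subgroup: `M ⧸ ker N` embeds in the torsion-free `M` and is finitely generated, hence
free. So `N = 0`, and `|J| • m = N m = 0` forces every invariant `m` to vanish. -/

variable (J M : Type) [Group J] [AddCommGroup M] [DistribMulAction J M]

/-- The subgroup `M^J` of `J`-invariants of `M`. -/
def invariants : AddSubgroup M where
  carrier := {m | ∀ σ : J, σ • m = m}
  add_mem' := by
    intro a b ha hb σ
    rw [smul_add, ha σ, hb σ]
  zero_mem' := fun σ => smul_zero σ
  neg_mem' := by
    intro a ha σ
    rw [smul_neg, ha σ]

open Module Representation

lemma QuotientAddGroup.isTorsionFree_quotient_ker {A B : Type*} [AddCommGroup A] [AddCommGroup B]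
    [IsTorsionFree ℤ B] (f : A →+ B) : IsTorsionFree ℤ (A ⧸ f.ker) :=
  (kerLift_injective f).moduleIsTorsionFree _ fun n x => map_zsmul (kerLift f) n x

section Norm

variable {J M} [Fintype J]

variable (J) in
lemma norm_ofDistribMulAction_mem_invariants (m : M) :
    (ofDistribMulAction ℤ J M).norm m ∈ invariants J M :=
  fun σ => self_norm_apply (ofDistribMulAction ℤ J M) σ m

lemma norm_ofDistribMulAction_smul (σ : J) (m : M) :
    (ofDistribMulAction ℤ J M).norm (σ • m) = (ofDistribMulAction ℤ J M).norm m :=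
  norm_self_apply (ofDistribMulAction ℤ J M) σ m

lemma norm_ofDistribMulAction_of_mem_invariants {m : M} (hm : m ∈ invariants J M) :
    (ofDistribMulAction ℤ J M).norm m = (Fintype.card J : ℤ) • m := by
  simp [Finset.sum_congr rfl fun σ _ => hm σ]

lemma norm_ofDistribMulAction_sub_card_smul_mem {Y : AddSubgroup M}
    (htriv : ∀ (σ : J) (m : M), σ • m - m ∈ Y) (m : M) :
    (ofDistribMulAction ℤ J M).norm m - (Fintype.card J : ℤ) • m ∈ Y := by
  rw [norm_ofDistribMulAction_eq, natCast_zsmul, ← Finset.card_univ, ← Finset.sum_const,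
    ← Finset.sum_sub_distrib]
  exact Y.sum_mem fun σ _ => htriv σ m

theorem eq_top_of_invariants_eq_bot (hinv : invariants J M = ⊥) {Y : AddSubgroup M}
    [IsTorsionFree ℤ (M ⧸ Y)] (htriv : ∀ (σ : J) (m : M), σ • m - m ∈ Y) : Y = ⊤ := by
  refine (AddSubgroup.eq_top_iff' Y).2 fun m => ?_
  have hnorm : (ofDistribMulAction ℤ J M).norm m = 0 := by
    simpa [hinv] using norm_ofDistribMulAction_mem_invariants J m
  have hcard : (Fintype.card J : ℤ) • (m : M ⧸ Y) = 0 := by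
    rw [← QuotientAddGroup.mk_zsmul, QuotientAddGroup.eq_zero_iff]
    simpa [hnorm] using norm_ofDistribMulAction_sub_card_smul_mem htriv m
  rw [smul_eq_zero, QuotientAddGroup.eq_zero_iff] at hcard
  exact hcard.resolve_left (by simp)

theorem invariants_eq_bot_of_norm_eq_zero [IsTorsionFree ℤ M]
    (h : (ofDistribMulAction ℤ J M).norm = 0) : invariants J M = ⊥ := by
  refine (AddSubgroup.eq_bot_iff_forall _).2 fun m hm => ?_
  have hcard : (Fintype.card J : ℤ) • m = 0 := by
    rw [← norm_ofDistribMulAction_of_mem_invariants hm, h, LinearMap.zero_apply]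
  exact (smul_eq_zero.1 hcard).resolve_left (by simp)

end Norm

theorem invariants_eq_bot_iff_no_free_trivial_quotient [Finite J]
    [Module.Finite ℤ M] [Module.Free ℤ M] :
    invariants J M = ⊥ ↔
      ∀ Y : AddSubgroup M, (∀ σ : J, ∀ m ∈ Y, σ • m ∈ Y) →
        Module.Free ℤ (M ⧸ Y) → (∀ (σ : J) (m : M), σ • m - m ∈ Y) → Y = ⊤ := by
  have := Fintype.ofFinite J
  refine ⟨fun hinv Y _ _ htriv => eq_top_of_invariants_eq_bot hinv htriv, fun h => ?_⟩
  let ν := ((ofDistribMulAction ℤ J M).norm : M →+ M)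
  have : IsTorsionFree ℤ (M ⧸ ν.ker) := QuotientAddGroup.isTorsionFree_quotient_ker ν
  have : Module.Finite ℤ (M ⧸ ν.ker) :=
    .of_surjective (QuotientAddGroup.mk' ν.ker).toIntLinearMap (QuotientAddGroup.mk'_surjective _)
  have hker : ν.ker = ⊤ := h ν.ker (fun σ m hm => (norm_ofDistribMulAction_smul σ m).trans hm)
    free_of_finite_type_torsion_free' fun σ m =>
      (map_sub ν _ _).trans (sub_eq_zero.2 (norm_ofDistribMulAction_smul σ m))
  exact invariants_eq_bot_of_norm_eq_zero <|
    LinearMap.toAddMonoidHom_injective (AddMonoidHom.ker_eq_top_iff.1 hker)
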